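/- Let A = (λ₁, λ₂, λ₃, a, b, c) ∈ J₃(ℍ) and μ ∈ ℂ. Then there exists a nonzero vector (x, y, z) ∈ ℍ³ satisfying λ₁x + c·y + b̄·z = μ·x, c̄·x + λ₂y + a·z = μ·y, and b·x + ā·y + λ₃z = μ·z, if and only if det_ℍ(A − μ·I₃) = 0, where A − μ·I₃ denotes the tuple (λ₁ − μ, λ₂ − μ, λ₃ − μ, a, b, c). -/

import Mathlib

noncomputable section

open scoped Quaternion

/-- The complexified quaternions. -/
abbrev Hq : Type := Quaternion ℂ

/-- The determinant of the hermitian matrix `[[λ₁, c, b̄], [c̄, λ₂, a], [b, ā, λ₃]]`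
over the complexified quaternions:
`det_ℍ(A) = λ₁λ₂λ₃ + 2·Re(c·a·b) − λ₁|a|² − λ₂|b|² − λ₃|c|²`. -/
def detH (l1 l2 l3 : ℂ) (a b c : Hq) : ℂ :=
  l1 * l2 * l3 + 2 * (c * a * b).re - l1 * Quaternion.normSq a - l2 * Quaternion.normSq b
    - l3 * Quaternion.normSq c

/-!
Write `M` for the hermitian matrix of `A − μ`, `t` for its trace and `σ₂` for the sum of its
principal `2 × 2` minors `mᵢ mⱼ − |x|²`. The matrix `N = M² − t M + σ₂` is a polynomial in `M`,
hence commutes with it, and a coordinate computation (Cayley–Hamilton) gives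
`M N = N M = det_ℍ(M)`. If `det_ℍ(M) ≠ 0`, `N` inverts `M` up to an invertible scalar, so `M` has
trivial kernel. If `det_ℍ(M) = 0`, every column of `N` lies in the kernel of `M`. When `N = 0`,
its trace `σ₂` vanishes too, so `M (M − t) = 0` and a nonzero column of `M − t` is a solution;
and `M = t` is only possible for `M = 0`, since taking traces gives `t = 3 t`.
-/

open Matrix Quaternion

theorem Matrix.exists_mulVec_eq_zero_of_mul_eq_zero {m n k R : Type*} [Fintype n] [Fintype k]
    [DecidableEq k] [Semiring R] {M : Matrix m n R} {N : Matrix n k R} (h : M * N = 0)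
    (hN : N ≠ 0) : ∃ v ≠ 0, M *ᵥ v = 0 := by
  obtain ⟨i, j, hij⟩ : ∃ i j, N i j ≠ 0 := by
    by_contra! h0
    exact hN (Matrix.ext h0)
  refine ⟨N *ᵥ Pi.single j 1, fun hv => hij ?_, ?_⟩
  · simpa using congrFun hv i
  · rw [mulVec_mulVec, h, zero_mulVec]

section

variable (m₁ m₂ m₃ : ℂ) (a b c : Hq)

local notation "ι" => algebraMap ℂ (Matrix (Fin 3) (Fin 3) Hq)

def hermMatrix : Matrix (Fin 3) (Fin 3) Hq :=
  !![(m₁ : Hq), c, star b; star c, m₂, a; b, star a, m₃]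

def hermSigma₂ : ℂ :=
  m₁ * m₂ + m₁ * m₃ + m₂ * m₃ - normSq a - normSq b - normSq c

/-- Over a commutative ring, Cayley–Hamilton identifies this with the classical adjugate. -/
def hermAdjugate : Matrix (Fin 3) (Fin 3) Hq :=
  hermMatrix m₁ m₂ m₃ a b c * hermMatrix m₁ m₂ m₃ a b c
    - ι (m₁ + m₂ + m₃) * hermMatrix m₁ m₂ m₃ a b c + ι (hermSigma₂ m₁ m₂ m₃ a b c)

theorem trace_hermMatrix : (hermMatrix m₁ m₂ m₃ a b c).trace = ((m₁ + m₂ + m₃ : ℂ) : Hq) := by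
  simp [hermMatrix, Matrix.trace, Fin.sum_univ_three]

theorem trace_hermAdjugate :
    (hermAdjugate m₁ m₂ m₃ a b c).trace = (hermSigma₂ m₁ m₂ m₃ a b c : Hq) := by
  ext <;>
    simp [hermAdjugate, hermMatrix, hermSigma₂, Matrix.trace, Matrix.mul_apply, Fin.sum_univ_three,
      algebraMap_matrix_apply, algebraMap_def, normSq_def', pow_two] <;>
    ring

theorem hermMatrix_mul_hermAdjugate :
    hermMatrix m₁ m₂ m₃ a b c * hermAdjugate m₁ m₂ m₃ a b c = ι (detH m₁ m₂ m₃ a b c) := by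
  ext i j <;> fin_cases i <;> fin_cases j <;>
    simp only [hermAdjugate, Matrix.mul_apply, Fin.sum_univ_three, Matrix.add_apply,
      Matrix.sub_apply, algebraMap_matrix_apply, algebraMap_def, Fin.isValue, Fin.reduceEq,
      ↓reduceIte, hermMatrix, of_apply, cons_val', cons_val_zero, cons_val_one, cons_val_two,
      cons_val_fin_one, tail_cons, vecHead, zero_mul, add_zero,
      zero_add, Fin.zero_eta, Fin.mk_one, Fin.reduceFinMk] <;>
    simp only [re_add, re_sub, re_mul, re_coe, re_star, re_zero, imI_add, imI_sub, imI_mul,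
      imI_coe, imI_star, imI_zero, imJ_add, imJ_sub, imJ_mul, imJ_coe, imJ_star, imJ_zero,
      imK_add, imK_sub, imK_mul, imK_coe, imK_star, imK_zero, hermSigma₂, detH, normSq_def'] <;>
    ring

theorem hermAdjugate_commute_hermMatrix :
    Commute (hermAdjugate m₁ m₂ m₃ a b c) (hermMatrix m₁ m₂ m₃ a b c) :=
  (((Commute.refl _).mul_left (Commute.refl _)).sub_left
    ((Algebra.commute_algebraMap_left _ _).mul_left (Commute.refl _))).add_left
    (Algebra.commute_algebraMap_left _ _)

variable {m₁ m₂ m₃ a b c}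

theorem eq_zero_of_hermMatrix_mulVec_eq_zero (hD : detH m₁ m₂ m₃ a b c ≠ 0) {v : Fin 3 → Hq}
    (hv : hermMatrix m₁ m₂ m₃ a b c *ᵥ v = 0) : v = 0 := by
  have h := congrArg (hermAdjugate m₁ m₂ m₃ a b c *ᵥ ·) hv
  simp only [mulVec_mulVec, (hermAdjugate_commute_hermMatrix m₁ m₂ m₃ a b c).eq,
    hermMatrix_mul_hermAdjugate, algebraMap_eq_diagonal, mulVec_zero] at h
  funext i
  have hi := congrFun h i
  rw [mulVec_diagonal, Pi.algebraMap_apply] at hi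
  exact ((IsUnit.mk0 _ hD).map (algebraMap ℂ Hq)).mul_right_eq_zero.mp hi

theorem exists_hermMatrix_mulVec_eq_zero (hD : detH m₁ m₂ m₃ a b c = 0) :
    ∃ v ≠ 0, hermMatrix m₁ m₂ m₃ a b c *ᵥ v = 0 := by
  set M := hermMatrix m₁ m₂ m₃ a b c
  set t := m₁ + m₂ + m₃
  by_cases hN : hermAdjugate m₁ m₂ m₃ a b c = 0
  swap
  · exact exists_mulVec_eq_zero_of_mul_eq_zero
      (by rw [hermMatrix_mul_hermAdjugate, hD, map_zero]) hN
  have hσ : hermSigma₂ m₁ m₂ m₃ a b c = 0 := by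
    have h := trace_hermAdjugate m₁ m₂ m₃ a b c
    rw [hN, trace_zero] at h
    exact coe_injective h.symm
  have hMt : M * (M - ι t) = 0 := by
    rwa [hermAdjugate, hσ, map_zero, add_zero, Algebra.commutes, ← mul_sub] at hN
  by_cases hM : M - ι t = 0
  swap
  · exact exists_mulVec_eq_zero_of_mul_eq_zero hMt hM
  have ht : t = 0 := by
    have h := (trace_hermMatrix m₁ m₂ m₃ a b c).symm.trans (congrArg trace (sub_eq_zero.mp hM))
    simp only [algebraMap_eq_diagonal, trace_diagonal, Fin.sum_univ_three,
      Pi.algebraMap_apply, algebraMap_def, ← coe_add] at h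
    linear_combination -coe_injective h / 2
  refine ⟨Pi.single 0 1, by simp, ?_⟩
  rw [sub_eq_zero.mp hM, ht, map_zero, zero_mulVec]

theorem exists_hermMatrix_mulVec_eq_zero_iff :
    (∃ v ≠ 0, hermMatrix m₁ m₂ m₃ a b c *ᵥ v = 0) ↔ detH m₁ m₂ m₃ a b c = 0 :=
  ⟨fun ⟨_, hv, hMv⟩ => by_contra fun hD => hv (eq_zero_of_hermMatrix_mulVec_eq_zero hD hMv),
    exists_hermMatrix_mulVec_eq_zero⟩

end

theorem hermMatrix_sub_mulVec_eq_zero_iff (l₁ l₂ l₃ μ : ℂ) (a b c x y z : Hq) :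
    hermMatrix (l₁ - μ) (l₂ - μ) (l₃ - μ) a b c *ᵥ ![x, y, z] = 0 ↔
      l₁ • x + c * y + star b * z = μ • x ∧
        star c * x + l₂ • y + a * z = μ • y ∧
        b * x + star a * y + l₃ • z = μ • z := by
  simp only [hermMatrix, cons_mulVec, vec3_dotProduct', empty_mulVec, cons_eq_zero_iff, zero_empty,
    and_true, coe_sub, sub_mul, coe_mul_eq_smul]
  refine and_congr ?_ (and_congr ?_ ?_) <;>
    exact ⟨fun h => by linear_combination (norm := module) h,
      fun h => by linear_combination (norm := module) h⟩

/-- The quaternionic eigenvalue problem: `μ ∈ ℂ` is a left eigenvalue of the hermitian matrix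
`A = [[λ₁, c, b̄], [c̄, λ₂, a], [b, ā, λ₃]] ∈ J₃(ℍ)` (i.e. there is a nonzero `(x,y,z) ∈ ℍ³`
with `A·(x,y,z) = μ·(x,y,z)`) if and only if `det_ℍ(A − μ·I₃) = 0`. -/
theorem quaternionic_eigenvalue_problem (l1 l2 l3 μ : ℂ) (a b c : Hq) :
    (∃ v : Hq × Hq × Hq, v ≠ 0 ∧
        l1 • v.1 + c * v.2.1 + star b * v.2.2 = μ • v.1 ∧
        star c * v.1 + l2 • v.2.1 + a * v.2.2 = μ • v.2.1 ∧
        b * v.1 + star a * v.2.1 + l3 • v.2.2 = μ • v.2.2) ↔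
      detH (l1 - μ) (l2 - μ) (l3 - μ) a b c = 0 := by
  rw [← exists_hermMatrix_mulVec_eq_zero_iff]
  constructor
  · rintro ⟨⟨x, y, z⟩, hv, heq⟩
    refine ⟨![x, y, z], ?_, (hermMatrix_sub_mulVec_eq_zero_iff l1 l2 l3 μ a b c x y z).mpr heq⟩
    simpa [cons_eq_zero_iff] using hv
  · rintro ⟨v, hv, hMv⟩
    refine ⟨(v 0, v 1, v 2), fun h => hv ?_, (hermMatrix_sub_mulVec_eq_zero_iff ..).mp ?_⟩
    · simp only [Prod.mk_eq_zero] at h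
      ext i : 1
      fin_cases i <;> simp [h]
    · exact (congrArg _ (FinVec.etaExpand_eq v)).trans hMv
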